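/- Let Ω be a bounded connected open set in ℝⁿ and L a uniformly elliptic divergence-form operator as above. Suppose v, w ∈ C²(Ω) ∩ C(Ω̄) satisfy Lv ≥ Lw and Lw < 0 in Ω, and w > 0 on Ω̄. Then sup_Ω (v/w) ≤ max{ sup_{∂Ω}(v⁺/w), 1 }. -/

import Mathlib

open Filter Topology Matrix

/-- Divergence-form second-order operator
`L v = ∑ i ∂ᵢ (∑ j aᵢⱼ ∂ⱼ v + bᵢ v)`. -/
noncomputable def Ldiv {n : ℕ} (a : Fin n → Fin n → EuclideanSpace ℝ (Fin n) → ℝ)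
    (b : Fin n → EuclideanSpace ℝ (Fin n) → ℝ)
    (v : EuclideanSpace ℝ (Fin n) → ℝ) (x : EuclideanSpace ℝ (Fin n)) : ℝ :=
  ∑ i, fderiv ℝ
    (fun y => (∑ j, a i j y * fderiv ℝ v y (EuclideanSpace.single j 1)) + b i y * v y)
    x (EuclideanSpace.single i 1)

/-!
Let `x₀` maximize `v / w` over the compact set `closure Ω`, with maximum `M`. If `x₀` lies on the
boundary, the bound is immediate. If `x₀ ∈ Ω` and `M > 1`, then `u = v - M w` is `≤ 0` near `x₀`
with `u x₀ = 0`, so `x₀` is a critical point of `u` with negative semidefinite Hessian. There all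
lower-order terms of `L u` vanish and `L u (x₀) = ∑ aᵢⱼ ∂ᵢ∂ⱼ u (x₀) ≤ 0` by ellipticity, whereas
`L u = L v - M L w ≥ (1 - M) L w > 0`.
-/

theorem IsLocalMax.deriv_deriv_nonpos {f : ℝ → ℝ} {x₀ : ℝ} (h : IsLocalMax f x₀)
    (hc : ContinuousAt f x₀) : deriv (deriv f) x₀ ≤ 0 := by
  by_contra! hpos
  -- the second-derivative test makes `x₀` a local minimum too, so `f` is locally constant
  have hmin : IsLocalMin f x₀ := isLocalMin_of_deriv_deriv_pos hpos h.deriv_eq_zero hc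
  have hconst : f =ᶠ[𝓝 x₀] fun _ => f x₀ :=
    (h.and hmin).mono fun _ hy => le_antisymm hy.1 hy.2
  have := hconst.deriv.deriv_eq
  simp [this] at hpos

theorem IsLocalMax.fderiv_fderiv_apply_self_nonpos {E : Type*} [NormedAddCommGroup E]
    [NormedSpace ℝ E] {u : E → ℝ} {x₀ : E} (h : IsLocalMax u x₀) (hu : ContDiffAt ℝ 2 u x₀)
    (ξ : E) : fderiv ℝ (fderiv ℝ u) x₀ ξ ξ ≤ 0 := by
  set line : ℝ → E := fun t => x₀ + t • ξ
  have hline : ∀ t, HasDerivAt line ξ t := fun t => by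
    simpa only [one_smul] using ((hasDerivAt_id' t).smul_const ξ).const_add x₀
  have hline0 : line 0 = x₀ := by simp [line]
  have hline_tendsto : Tendsto line (𝓝 0) (𝓝 x₀) :=
    hline0 ▸ (hline 0).continuousAt.tendsto
  have hderiv : deriv (u ∘ line) =ᶠ[𝓝 0] fun t => fderiv ℝ u (line t) ξ := by
    filter_upwards [hline_tendsto.eventually (hu.eventually (by simp))] with t ht
    exact ((ht.differentiableAt two_ne_zero).hasFDerivAt.comp_hasDerivAt t (hline t)).deriv
  have hderiv2 : HasDerivAt (fun t => fderiv ℝ u (line t) ξ) (fderiv ℝ (fderiv ℝ u) x₀ ξ ξ) 0 := by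
    have hD2 : HasFDerivAt (fderiv ℝ u) (fderiv ℝ (fderiv ℝ u) x₀) (line 0) := by
      rw [hline0]
      exact ((hu.fderiv_right (m := 1) (by norm_num)).differentiableAt one_ne_zero).hasFDerivAt
    simpa using (hD2.comp_hasDerivAt 0 (hline 0)).clm_apply (hasDerivAt_const 0 ξ)
  rw [← hderiv2.deriv, ← hderiv.deriv_eq]
  exact (hline0 ▸ h).comp_continuous (hline 0).continuousAt |>.deriv_deriv_nonpos
    (hu.continuousAt.comp_of_eq (hline 0).continuousAt hline0)

theorem Matrix.PosSemidef.sum_mul_nonneg {ι : Type*} [Fintype ι] {A N : Matrix ι ι ℝ}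
    (hA : ∀ ξ : ι → ℝ, 0 ≤ ∑ i, ∑ j, A i j * ξ i * ξ j) (hN : N.PosSemidef) :
    0 ≤ ∑ i, ∑ j, A i j * N i j := by
  obtain ⟨m, v, rfl⟩ := posSemidef_iff_eq_sum_vecMulVec.mp hN
  simp only [Matrix.sum_apply, vecMulVec_apply, star_trivial, Finset.mul_sum]
  rw [Finset.sum_congr rfl fun i _ => Finset.sum_comm, Finset.sum_comm]
  exact Finset.sum_nonneg fun k _ => by simpa only [mul_assoc] using hA (v k)

theorem posSemidef_of_forall_apply_self_nonneg {ι : Type*} [Fintype ι] [DecidableEq ι]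
    (B : EuclideanSpace ℝ ι →L[ℝ] EuclideanSpace ℝ ι →L[ℝ] ℝ) (hB_symm : ∀ ξ η, B ξ η = B η ξ)
    (hB : ∀ ξ, 0 ≤ B ξ ξ) :
    (Matrix.of fun i j => B (EuclideanSpace.single i 1) (EuclideanSpace.single j 1)).PosSemidef := by
  refine .of_dotProduct_mulVec_nonneg ?_ fun x => ?_
  · ext i j
    simp [hB_symm (EuclideanSpace.single i 1)]
  · have hx : WithLp.toLp 2 x = ∑ i, x i • EuclideanSpace.single i (1 : ℝ) := by
      simpa using ((EuclideanSpace.basisFun ι ℝ).toBasis.sum_repr (WithLp.toLp 2 x)).symm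
    have := hB (WithLp.toLp 2 x)
    rw [hx] at this
    simp only [map_sum, map_smul, _root_.sum_apply, _root_.smul_apply, smul_eq_mul,
      Finset.mul_sum, dotProduct, Pi.star_apply, star_trivial, mulVec, of_apply] at this ⊢
    rw [Finset.sum_comm]
    exact this.trans_eq (Finset.sum_congr rfl fun i _ => Finset.sum_congr rfl fun j _ => by ring)

section Flux

variable {n : ℕ} {a : Fin n → Fin n → EuclideanSpace ℝ (Fin n) → ℝ}
  {b : Fin n → EuclideanSpace ℝ (Fin n) → ℝ} {u v w : EuclideanSpace ℝ (Fin n) → ℝ}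
  {x : EuclideanSpace ℝ (Fin n)}

noncomputable def flux (a : Fin n → Fin n → EuclideanSpace ℝ (Fin n) → ℝ)
    (b : Fin n → EuclideanSpace ℝ (Fin n) → ℝ) (u : EuclideanSpace ℝ (Fin n) → ℝ) (i : Fin n)
    (y : EuclideanSpace ℝ (Fin n)) : ℝ :=
  (∑ j, a i j y * fderiv ℝ u y (EuclideanSpace.single j 1)) + b i y * u y

theorem Ldiv_eq_sum_fderiv_flux :
    Ldiv a b u x = ∑ i, fderiv ℝ (flux a b u i) x (EuclideanSpace.single i 1) :=
  rfl

theorem differentiableAt_flux (ha : ∀ i j, DifferentiableAt ℝ (a i j) x)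
    (hb : ∀ i, DifferentiableAt ℝ (b i) x) (hu : ContDiffAt ℝ 2 u x) (i : Fin n) :
    DifferentiableAt ℝ (flux a b u i) x := by
  have hDu : DifferentiableAt ℝ (fderiv ℝ u) x :=
    (hu.fderiv_right (m := 1) (by norm_num)).differentiableAt one_ne_zero
  exact (DifferentiableAt.fun_sum fun j _ =>
    (ha i j).mul (hDu.clm_apply (differentiableAt_const _))).add
    ((hb i).mul (hu.differentiableAt two_ne_zero))

theorem flux_sub_const_mul_apply {y : EuclideanSpace ℝ (Fin n)} (hv : DifferentiableAt ℝ v y)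
    (hw : DifferentiableAt ℝ w y) (c : ℝ) (i : Fin n) :
    flux a b (fun z => v z - c * w z) i y = flux a b v i y - c * flux a b w i y := by
  have hpartial : ∀ j, fderiv ℝ (fun z => v z - c * w z) y (EuclideanSpace.single j 1) =
      fderiv ℝ v y (EuclideanSpace.single j 1) - c * fderiv ℝ w y (EuclideanSpace.single j 1) :=
    fun j => by simp [fderiv_fun_sub hv (hw.const_mul c), fderiv_const_mul hw c]
  have hsum : ∑ j, a i j y * fderiv ℝ (fun z => v z - c * w z) y (EuclideanSpace.single j 1) =
      (∑ j, a i j y * fderiv ℝ v y (EuclideanSpace.single j 1)) -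
        c * ∑ j, a i j y * fderiv ℝ w y (EuclideanSpace.single j 1) := by
    rw [Finset.mul_sum, ← Finset.sum_sub_distrib]
    exact Finset.sum_congr rfl fun j _ => by rw [hpartial]; ring
  rw [flux, flux, flux, hsum]
  ring

theorem Ldiv_sub_const_mul (ha : ∀ i j, DifferentiableAt ℝ (a i j) x)
    (hb : ∀ i, DifferentiableAt ℝ (b i) x) (hv : ContDiffAt ℝ 2 v x) (hw : ContDiffAt ℝ 2 w x)
    (c : ℝ) : Ldiv a b (fun y => v y - c * w y) x = Ldiv a b v x - c * Ldiv a b w x := by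
  simp only [Ldiv_eq_sum_fderiv_flux, Finset.mul_sum, ← Finset.sum_sub_distrib]
  refine Finset.sum_congr rfl fun i _ => ?_
  have hflux : flux a b (fun y => v y - c * w y) i =ᶠ[𝓝 x]
      fun y => flux a b v i y - c * flux a b w i y := by
    filter_upwards [hv.eventually (by simp), hw.eventually (by simp)] with y hvy hwy
    exact flux_sub_const_mul_apply (hvy.differentiableAt two_ne_zero)
      (hwy.differentiableAt two_ne_zero) c i
  rw [hflux.fderiv_eq, fderiv_fun_sub (differentiableAt_flux ha hb hv i)
    ((differentiableAt_flux ha hb hw i).const_mul c), fderiv_const_mul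
    (differentiableAt_flux ha hb hw i)]
  rfl

theorem Ldiv_eq_sum_of_fderiv_eq_zero (ha : ∀ i j, DifferentiableAt ℝ (a i j) x)
    (hb : ∀ i, DifferentiableAt ℝ (b i) x) (hu : ContDiffAt ℝ 2 u x) (hu0 : u x = 0)
    (hDu : fderiv ℝ u x = 0) :
    Ldiv a b u x = ∑ i, ∑ j, a i j x *
      fderiv ℝ (fderiv ℝ u) x (EuclideanSpace.single i 1) (EuclideanSpace.single j 1) := by
  have hD2u : DifferentiableAt ℝ (fderiv ℝ u) x :=
    (hu.fderiv_right (m := 1) (by norm_num)).differentiableAt one_ne_zero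
  rw [Ldiv_eq_sum_fderiv_flux]
  refine Finset.sum_congr rfl fun i _ => ?_
  have hpartial : ∀ j, HasFDerivAt (fun y => fderiv ℝ u y (EuclideanSpace.single j 1))
      ((fderiv ℝ (fderiv ℝ u) x).flip (EuclideanSpace.single j 1)) x := fun j => by
    simpa using hD2u.hasFDerivAt.clm_apply (hasFDerivAt_const (EuclideanSpace.single j 1) x)
  have hflux := (HasFDerivAt.fun_sum (u := Finset.univ) fun j _ =>
    (ha i j).hasFDerivAt.fun_mul (hpartial j)).fun_add
    ((hb i).hasFDerivAt.fun_mul (hu.differentiableAt two_ne_zero).hasFDerivAt)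
  rw [(show HasFDerivAt (flux a b u i) _ x from hflux).fderiv]
  simp [hu0, hDu]

theorem Ldiv_nonpos_of_isLocalMax (ha : ∀ i j, DifferentiableAt ℝ (a i j) x)
    (hb : ∀ i, DifferentiableAt ℝ (b i) x)
    (hell : ∀ ξ : Fin n → ℝ, 0 ≤ ∑ i, ∑ j, a i j x * ξ i * ξ j) (hu : ContDiffAt ℝ 2 u x)
    (hmax : IsLocalMax u x) (hu0 : u x = 0) : Ldiv a b u x ≤ 0 := by
  rw [Ldiv_eq_sum_of_fderiv_eq_zero ha hb hu hu0 hmax.fderiv_eq_zero]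
  have hsymm := hu.isSymmSndFDerivAt (by simp)
  have hneg := posSemidef_of_forall_apply_self_nonneg (-fderiv ℝ (fderiv ℝ u) x)
    (fun ξ η => by simp [hsymm.eq ξ η])
    (fun ξ => by simpa using hmax.fderiv_fderiv_apply_self_nonpos hu ξ)
  simpa using hneg.sum_mul_nonneg hell

theorem div_le_one_of_isLocalMax_div (ha : ∀ i j, DifferentiableAt ℝ (a i j) x)
    (hb : ∀ i, DifferentiableAt ℝ (b i) x)
    (hell : ∀ ξ : Fin n → ℝ, 0 ≤ ∑ i, ∑ j, a i j x * ξ i * ξ j)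
    (hv : ContDiffAt ℝ 2 v x) (hw : ContDiffAt ℝ 2 w x) (hwpos : ∀ᶠ y in 𝓝 x, 0 < w y)
    (hLvw : Ldiv a b w x ≤ Ldiv a b v x) (hLw : Ldiv a b w x < 0)
    (hmax : IsLocalMax (fun y => v y / w y) x) : v x / w x ≤ 1 := by
  by_contra! hM
  set M := v x / w x
  have hu0 : v x - M * w x = 0 := by
    rw [div_mul_cancel₀ _ hwpos.self_of_nhds.ne', sub_self]
  have humax : IsLocalMax (fun y => v y - M * w y) x := by
    filter_upwards [hmax, hwpos] with y hy hwy
    rw [hu0, sub_nonpos]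
    exact (div_le_iff₀ hwy).1 hy
  have hLu := Ldiv_nonpos_of_isLocalMax ha hb hell (hv.sub (contDiffAt_const.mul hw)) humax hu0
  rw [Ldiv_sub_const_mul ha hb hv hw] at hLu
  nlinarith [mul_pos (sub_pos.2 hM) (neg_pos.2 hLw)]

end Flux

theorem comparison_principle_two_general {n : ℕ}
    (Ω : Set (EuclideanSpace ℝ (Fin n)))
    (hΩo : IsOpen Ω) (hΩb : Bornology.IsBounded Ω)
    (a : Fin n → Fin n → EuclideanSpace ℝ (Fin n) → ℝ)
    (b : Fin n → EuclideanSpace ℝ (Fin n) → ℝ)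
    (ha : ∀ i j, ContDiffOn ℝ 1 (a i j) Ω ∧ ContinuousOn (a i j) (closure Ω))
    (hb : ∀ i, ContDiffOn ℝ 1 (b i) Ω ∧ ContinuousOn (b i) (closure Ω))
    (lam : ℝ) (hlam : 0 < lam)
    (hell : ∀ x ∈ Ω, ∀ ξ : EuclideanSpace ℝ (Fin n),
      lam * ‖ξ‖ ^ 2 ≤ ∑ i, ∑ j, a i j x * ξ i * ξ j)
    (v w : EuclideanSpace ℝ (Fin n) → ℝ)
    (hv : ContDiffOn ℝ 2 v Ω) (hvc : ContinuousOn v (closure Ω))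
    (hw : ContDiffOn ℝ 2 w Ω) (hwc : ContinuousOn w (closure Ω))
    (hLvw : ∀ x ∈ Ω, Ldiv a b w x ≤ Ldiv a b v x)
    (hLw : ∀ x ∈ Ω, Ldiv a b w x < 0)
    (hwpos : ∀ x ∈ closure Ω, 0 < w x) :
    sSup ((fun x => v x / w x) '' Ω) ≤
      max (sSup ((fun x => max (v x) 0 / w x) '' frontier Ω)) 1 := by
  have hcompact : IsCompact (closure Ω) := hΩb.isCompact_closure
  -- `Real.sSup_le` also covers `Ω = ∅`, where `sSup ∅ = 0`
  refine Real.sSup_le ?_ (le_max_of_le_right zero_le_one)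
  rintro _ ⟨x, hx, rfl⟩
  obtain ⟨x₀, hx₀, hmax⟩ := hcompact.exists_isMaxOn ⟨x, subset_closure hx⟩
    (hvc.div hwc fun y hy => (hwpos y hy).ne')
  refine (hmax (subset_closure hx)).trans ?_
  by_cases hx₀Ω : x₀ ∈ Ω
  · have hnhds : Ω ∈ 𝓝 x₀ := hΩo.mem_nhds hx₀Ω
    have hA : ∀ ξ : Fin n → ℝ, 0 ≤ ∑ i, ∑ j, a i j x₀ * ξ i * ξ j := fun ξ =>
      (mul_nonneg hlam.le (sq_nonneg _)).trans (hell x₀ hx₀Ω (WithLp.toLp 2 ξ))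
    refine le_max_of_le_right (div_le_one_of_isLocalMax_div
      (fun i j => ((ha i j).1.contDiffAt hnhds).differentiableAt one_ne_zero)
      (fun i => ((hb i).1.contDiffAt hnhds).differentiableAt one_ne_zero) hA
      (hv.contDiffAt hnhds) (hw.contDiffAt hnhds)
      (eventually_of_mem hnhds fun y hy => hwpos y (subset_closure hy))
      (hLvw x₀ hx₀Ω) (hLw x₀ hx₀Ω) (hmax.isLocalMax (mem_of_superset hnhds subset_closure)))
  · have hx₀fr : x₀ ∈ frontier Ω := hΩo.frontier_eq ▸ ⟨hx₀, hx₀Ω⟩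
    have hbdd : BddAbove ((fun x => max (v x) 0 / w x) '' frontier Ω) :=
      (hcompact.of_isClosed_subset isClosed_frontier frontier_subset_closure).bddAbove_image
        (((hvc.mono frontier_subset_closure).sup continuousOn_const).div
          (hwc.mono frontier_subset_closure) fun y hy => (hwpos y (frontier_subset_closure hy)).ne')
    exact le_max_of_le_left
      ((div_le_div_of_nonneg_right (le_max_left _ _) (hwpos x₀ hx₀).le).trans
        (le_csSup hbdd ⟨x₀, hx₀fr, rfl⟩))

/-- Comparison principle (Theorem A.2): `v/w` attains its positive maximum on the boundary
or is no greater than `1`. -/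
theorem comparison_principle_two {n : ℕ}
    (Ω : Set (EuclideanSpace ℝ (Fin n)))
    (hΩo : IsOpen Ω) (hΩb : Bornology.IsBounded Ω) (hΩc : IsConnected Ω)
    (a : Fin n → Fin n → EuclideanSpace ℝ (Fin n) → ℝ)
    (b : Fin n → EuclideanSpace ℝ (Fin n) → ℝ)
    (ha : ∀ i j, ContDiffOn ℝ 1 (a i j) Ω ∧ ContinuousOn (a i j) (closure Ω))
    (hb : ∀ i, ContDiffOn ℝ 1 (b i) Ω ∧ ContinuousOn (b i) (closure Ω))
    (lam : ℝ) (hlam : 0 < lam)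
    (hell : ∀ x ∈ Ω, ∀ ξ : EuclideanSpace ℝ (Fin n),
      lam * ‖ξ‖ ^ 2 ≤ ∑ i, ∑ j, a i j x * ξ i * ξ j)
    (v w : EuclideanSpace ℝ (Fin n) → ℝ)
    (hv : ContDiffOn ℝ 2 v Ω) (hvc : ContinuousOn v (closure Ω))
    (hw : ContDiffOn ℝ 2 w Ω) (hwc : ContinuousOn w (closure Ω))
    (hLvw : ∀ x ∈ Ω, Ldiv a b w x ≤ Ldiv a b v x)
    (hLw : ∀ x ∈ Ω, Ldiv a b w x < 0)
    (hwpos : ∀ x ∈ closure Ω, 0 < w x) :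
    sSup ((fun x => v x / w x) '' Ω) ≤
      max (sSup ((fun x => max (v x) 0 / w x) '' frontier Ω)) 1 :=
  comparison_principle_two_general Ω hΩo hΩb a b ha hb lam hlam hell v w hv hvc hw hwc hLvw hLw
    hwpos
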